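/- For any integer p ≥ 2 and any string t of length n, the sum of the exponents of all cubic runs of t whose minimal period is at least p is less than 12n/p. -/

import Mathlib

/-- `p` is a period of the substring `t[i..j]` of the 1-indexed string `t`:
`1 ≤ p ≤ |t[i..j]| = j - i + 1`, and `t[k] = t[k + p]` whenever both positions
lie in `[i..j]` (vacuously, the length is always a period). -/
def IsPeriodOf {α : Type*} (t : ℕ → α) (i j p : ℕ) : Prop :=
  1 ≤ p ∧ p ≤ j + 1 - i ∧ ∀ k, i ≤ k → k + p ≤ j → t (k + p) = t k

/-- The minimal period of the substring `t[i..j]`. -/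
noncomputable def minPeriod {α : Type*} (t : ℕ → α) (i j : ℕ) : ℕ :=
  sInf {p | IsPeriodOf t i j p}

/-- `t[i..j]` is a run of the string `t[1..n]`: its exponent is at least `2`
(i.e. `j - i + 1 ≥ 2 · minPeriod`), and the extensions `t[i-1..j]` (if `i > 1`)
and `t[i..j+1]` (if `j < n`) have strictly larger minimal periods. -/
def IsRun {α : Type*} (t : ℕ → α) (n i j : ℕ) : Prop :=
  1 ≤ i ∧ i ≤ j ∧ j ≤ n ∧
  2 * minPeriod t i j ≤ j + 1 - i ∧
  (1 < i → minPeriod t i j < minPeriod t (i - 1) j) ∧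
  (j < n → minPeriod t i j < minPeriod t i (j + 1))

/-- A cubic run is a run of exponent at least `3`. -/
def IsCubicRun {α : Type*} (t : ℕ → α) (n i j : ℕ) : Prop :=
  IsRun t n i j ∧ 3 * minPeriod t i j ≤ j + 1 - i

/-!
Two distinct runs cannot share a stretch of length at least the sum of their periods: the
stretch would carry the smaller period over to the other run, contradicting minimality, and
with equal periods the union of the two runs would be periodic, contradicting maximality.
Hence, for cubic runs whose periods are within a factor `2` of each other, the cores obtained
by cutting one period off each end are pairwise disjoint. A cubic run of period `q` has exponent
at most `3 |core| / q`, so the cubic runs with period in `[Q, 2Q)` contribute at most `3n / Q`,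
and summing over the dyadic ranges `Q = 2^m p` gives at most `6n / p`.
-/

open Finset

section

variable {α : Type*} {t : ℕ → α}

namespace IsPeriodOf

variable {i j q : ℕ}

theorem mono (h : IsPeriodOf t i j q) {a b : ℕ} (ha : i ≤ a) (hb : b ≤ j)
    (hq : q ≤ b + 1 - a) : IsPeriodOf t a b q :=
  ⟨h.1, hq, fun k hk hkq => h.2.2 k (by omega) (by omega)⟩

theorem add_mul_eq (h : IsPeriodOf t i j q) (m : ℕ) {k : ℕ} (hk : i ≤ k)
    (hkm : k + m * q ≤ j) : t (k + m * q) = t k := by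
  induction m with
  | zero => simp
  | succ m ih =>
    rw [Nat.succ_mul, ← Nat.add_assoc] at hkm ⊢
    rw [h.2.2 _ (by omega) hkm, ih (by omega)]

theorem eq_of_modEq (h : IsPeriodOf t i j q) {k l : ℕ} (hk : i ≤ k) (hl : i ≤ l)
    (hkj : k ≤ j) (hlj : l ≤ j) (hmod : k ≡ l [MOD q]) : t k = t l := by
  wlog hkl : k ≤ l
  · exact (this h hl hk hlj hkj hmod.symm (by omega)).symm
  obtain ⟨m, hm⟩ := (Nat.modEq_iff_dvd' hkl).1 hmod
  have hl' : l = k + m * q := by rw [Nat.mul_comm]; omega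
  rw [hl', h.add_mul_eq m hk (by omega)]

theorem union {i' j' : ℕ} (h : IsPeriodOf t i j q) (h' : IsPeriodOf t i' j' q)
    (hov : max i i' + q ≤ min j j' + 1) : IsPeriodOf t (min i i') (max j j') q := by
  refine ⟨h.1, by have := h.2.1; omega, fun k hk hkq => ?_⟩
  by_cases hkj : i ≤ k ∧ k + q ≤ j
  · exact h.2.2 k hkj.1 hkj.2
  · exact h'.2.2 k (by omega) (by omega)

theorem of_subinterval (h : IsPeriodOf t i j q) {a b q' : ℕ} (h' : IsPeriodOf t a b q')
    (ha : i ≤ a) (hb : b ≤ j) (hlen : q' + q ≤ b + 1 - a) : IsPeriodOf t i j q' := by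
  refine ⟨h'.1, by omega, fun k hk hkq => ?_⟩
  have hq : 0 < q := h.1
  have haq : a ≤ q * a := Nat.le_mul_of_pos_left a hq
  -- the representative of `k` modulo `q` in `[a, a + q)`
  set x := a + (k + q * a - a) % q
  have hxq : x < a + q := Nat.add_lt_add_left (Nat.mod_lt _ hq) a
  have hx : x ≡ k [MOD q] := calc
    x ≡ a + (k + q * a - a) [MOD q] := (Nat.mod_modEq _ _).add_left a
    _ = k + q * a := by omega
    _ ≡ k [MOD q] := by simp [Nat.ModEq]
  calc t (k + q') = t (x + q') := h.eq_of_modEq (by omega) (by omega) hkq (by omega)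
        (hx.add_right q').symm
    _ = t x := h'.2.2 x (by omega) (by omega)
    _ = t k := h.eq_of_modEq (by omega) hk (by omega) (by omega) hx

end IsPeriodOf

theorem isPeriodOf_minPeriod (t : ℕ → α) {i j : ℕ} (hij : i ≤ j) :
    IsPeriodOf t i j (minPeriod t i j) :=
  Nat.sInf_mem (s := {p | IsPeriodOf t i j p})
    ⟨j + 1 - i, by omega, le_rfl, fun k hk hkq => by omega⟩

theorem minPeriod_le {i j q : ℕ} (h : IsPeriodOf t i j q) : minPeriod t i j ≤ q :=
  Nat.sInf_le h

namespace IsRun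

variable {n i j : ℕ}

theorem isPeriodOf (h : IsRun t n i j) : IsPeriodOf t i j (minPeriod t i j) :=
  isPeriodOf_minPeriod t h.2.1

theorem eq_of_isPeriodOf (h : IsRun t n i j) {i' j' : ℕ} (hi' : 1 ≤ i') (hj' : j' ≤ n)
    (hii' : i' ≤ i) (hjj' : j ≤ j') (hper : IsPeriodOf t i' j' (minPeriod t i j)) :
    i' = i ∧ j' = j := by
  obtain ⟨-, hij, -, hexp, hleft, hright⟩ := h
  have hq : 1 ≤ minPeriod t i j := hper.1
  constructor
  · by_contra hne
    have := minPeriod_le (hper.mono (a := i - 1) (b := j) (by omega) hjj' (by omega))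
    have := hleft (by omega)
    omega
  · by_contra hne
    have := minPeriod_le (hper.mono (a := i) (b := j + 1) hii' (by omega) (by omega))
    have := hright (by omega)
    omega

theorem eq_of_overlap {i' j' : ℕ} (h : IsRun t n i j) (h' : IsRun t n i' j')
    (hov : max i i' + (minPeriod t i j + minPeriod t i' j') ≤ min j j' + 1) :
    i = i' ∧ j = j' := by
  have hp := h.isPeriodOf
  have hp' := h'.isPeriodOf
  have hle : minPeriod t i' j' ≤ minPeriod t i j := minPeriod_le <|
    hp'.of_subinterval (hp.mono (le_max_left i i') (min_le_left j j') (by omega))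
      (le_max_right i i') (min_le_right j j') (by omega)
  have hge : minPeriod t i j ≤ minPeriod t i' j' := minPeriod_le <|
    hp.of_subinterval (hp'.mono (le_max_right i i') (min_le_right j j') (by omega))
      (le_max_left i i') (min_le_left j j') (by omega)
  have heq : minPeriod t i' j' = minPeriod t i j := le_antisymm hle hge
  have hU : IsPeriodOf t (min i i') (max j j') (minPeriod t i j) :=
    hp.union (heq ▸ hp') (by omega)
  obtain ⟨h1, h2⟩ := h.eq_of_isPeriodOf (by have := h.1; have := h'.1; omega)
    (by have := h.2.2.1; have := h'.2.2.1; omega) (min_le_left i i') (le_max_left j j') hU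
  obtain ⟨h1', h2'⟩ := h'.eq_of_isPeriodOf (by have := h.1; have := h'.1; omega)
    (by have := h.2.2.1; have := h'.2.2.1; omega) (min_le_right i i') (le_max_right j j')
    (heq ▸ hU)
  omega

theorem finite_setOf (t : ℕ → α) (n : ℕ) :
    {ij : ℕ × ℕ | IsRun t n ij.1 ij.2}.Finite := by
  refine (Set.finite_Icc (1, 1) (n, n)).subset ?_
  rintro ⟨i, j⟩ ⟨hi, hij, hjn, -⟩
  exact ⟨⟨hi, by omega⟩, ⟨by omega, hjn⟩⟩

end IsRun

noncomputable def runCore (t : ℕ → α) (i j : ℕ) : Finset ℕ :=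
  Icc (i + minPeriod t i j) (j - minPeriod t i j)

namespace IsCubicRun

variable {n i j : ℕ}

theorem length_le_three_mul_card_runCore (h : IsCubicRun t n i j) :
    j + 1 - i ≤ 3 * #(runCore t i j) := by
  have := h.2
  rw [runCore, Nat.card_Icc]
  omega

theorem runCore_subset_Icc (h : IsCubicRun t n i j) : runCore t i j ⊆ Icc 1 n := by
  obtain ⟨⟨hi, -, hjn, -⟩, -⟩ := h
  intro x hx
  simp only [runCore, mem_Icc] at hx ⊢
  omega

theorem disjoint_runCore {i' j' : ℕ} (h : IsCubicRun t n i j) (h' : IsCubicRun t n i' j')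
    (hle : minPeriod t i j ≤ 2 * minPeriod t i' j')
    (hle' : minPeriod t i' j' ≤ 2 * minPeriod t i j) (hne : (i, j) ≠ (i', j')) :
    Disjoint (runCore t i j) (runCore t i' j') := by
  rw [Finset.disjoint_left]
  intro x hx hx'
  simp only [runCore, mem_Icc] at hx hx'
  have := h.2
  have := h'.2
  obtain ⟨rfl, rfl⟩ := h.1.eq_of_overlap h'.1 (by omega)
  exact hne rfl

end IsCubicRun

theorem sum_exponent_le_of_minPeriod_mem_Ico {n Q : ℕ} (R : Finset (ℕ × ℕ))
    (hR : ∀ r ∈ R, IsCubicRun t n r.1 r.2 ∧ minPeriod t r.1 r.2 ∈ Set.Ico Q (2 * Q)) :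
    ∑ r ∈ R, ((r.2 + 1 - r.1 : ℕ) : ℝ) / minPeriod t r.1 r.2 ≤ 3 * n / Q := by
  classical
  have hcores : ∑ r ∈ R, #(runCore t r.1 r.2) ≤ n := by
    rw [← card_biUnion]
    · calc #(R.biUnion fun r => runCore t r.1 r.2) ≤ #(Icc 1 n) :=
            card_le_card (biUnion_subset.2 fun r hr => (hR r hr).1.runCore_subset_Icc)
        _ = n := by simp
    · intro r hr s hs hne
      obtain ⟨hr, hrQ, hrQ'⟩ := hR r hr
      obtain ⟨hs, hsQ, hsQ'⟩ := hR s hs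
      exact hr.disjoint_runCore hs (by omega) (by omega) hne
  have hpoint : ∀ r ∈ R, ((r.2 + 1 - r.1 : ℕ) : ℝ) / minPeriod t r.1 r.2
      ≤ 3 * (#(runCore t r.1 r.2) : ℝ) / Q := by
    intro r hr
    obtain ⟨hr, hQ, hQ'⟩ := hR r hr
    have hQpos : (0 : ℝ) < Q := by exact_mod_cast (by omega : 0 < Q)
    calc ((r.2 + 1 - r.1 : ℕ) : ℝ) / minPeriod t r.1 r.2
      _ ≤ ((r.2 + 1 - r.1 : ℕ) : ℝ) / Q :=
        div_le_div_of_nonneg_left (by positivity) hQpos (by exact_mod_cast hQ)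
      _ ≤ 3 * (#(runCore t r.1 r.2) : ℝ) / Q := by
        gcongr
        exact_mod_cast hr.length_le_three_mul_card_runCore
  calc _ ≤ ∑ r ∈ R, 3 * (#(runCore t r.1 r.2) : ℝ) / Q := sum_le_sum hpoint
    _ = 3 * ((∑ r ∈ R, #(runCore t r.1 r.2) : ℕ) : ℝ) / Q := by
        rw [← sum_div, ← mul_sum, Nat.cast_sum]
    _ ≤ 3 * n / Q := by gcongr

theorem mem_Ico_two_pow_log_div {p q : ℕ} (hp : 0 < p) (hpq : p ≤ q) :
    q ∈ Set.Ico (2 ^ Nat.log 2 (q / p) * p) (2 * (2 ^ Nat.log 2 (q / p) * p)) := by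
  have hlt := (Nat.div_lt_iff_lt_mul hp).1 (Nat.lt_pow_succ_log_self one_lt_two (q / p))
  refine ⟨(Nat.le_div_iff_mul_le hp).1 (Nat.pow_log_le_self 2 ?_), ?_⟩
  · exact (Nat.div_pos hpq hp).ne'
  · rwa [Nat.pow_succ, Nat.mul_comm _ 2, Nat.mul_assoc] at hlt

theorem sum_range_div_two_pow_mul_le {c : ℝ} (hc : 0 ≤ c) (N p : ℕ) :
    ∑ m ∈ range N, c / ((2 ^ m * p : ℕ) : ℝ) ≤ 2 * c / p := calc
  _ = c / p * ∑ m ∈ range N, (1 / 2 : ℝ) ^ m := by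
      rw [mul_sum]
      refine sum_congr rfl fun m _ => ?_
      push_cast
      rw [one_div_pow, mul_one_div, div_div, mul_comm (p : ℝ)]
  _ ≤ c / p * 2 := by gcongr; exact sum_geometric_two_le N
  _ = 2 * c / p := by ring

end

theorem sum_of_exponents_of_cubic_runs_general {α : Type*}
    (p n : ℕ) (hp : 2 ≤ p) (hn : 0 < n) (t : ℕ → α) :
    (∑ᶠ ij ∈ {ij : ℕ × ℕ | IsCubicRun t n ij.1 ij.2 ∧ p ≤ minPeriod t ij.1 ij.2},
        ((ij.2 + 1 - ij.1 : ℕ) : ℝ) / (minPeriod t ij.1 ij.2 : ℝ))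
      < 12 * n / p := by
  classical
  have hfin : {ij : ℕ × ℕ | IsCubicRun t n ij.1 ij.2 ∧ p ≤ minPeriod t ij.1 ij.2}.Finite :=
    (IsRun.finite_setOf t n).subset fun _ hr => hr.1.1
  set F := hfin.toFinset
  have hmem (r) (hr : r ∈ F) : IsCubicRun t n r.1 r.2 ∧ p ≤ minPeriod t r.1 r.2 :=
    hfin.mem_toFinset.1 hr
  have hdyadic (r) (hr : r ∈ F) : Nat.log 2 (minPeriod t r.1 r.2 / p) ∈ range (n + 1) := by
    obtain ⟨⟨hrun, -⟩, -⟩ := hmem r hr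
    have := hrun.isPeriodOf.2.1
    have := Nat.log_le_self 2 (minPeriod t r.1 r.2 / p)
    have := Nat.div_le_self (minPeriod t r.1 r.2) p
    exact mem_range.2 (by have := hrun.1; have := hrun.2.2.1; omega)
  rw [finsum_mem_eq_finite_toFinset_sum _ hfin, ← sum_fiberwise_of_maps_to hdyadic]
  calc _ ≤ ∑ m ∈ range (n + 1), 3 * (n : ℝ) / ((2 ^ m * p : ℕ) : ℝ) := by
        refine sum_le_sum fun m _ => sum_exponent_le_of_minPeriod_mem_Ico _ fun r hr => ?_
        obtain ⟨hrF, rfl⟩ := mem_filter.1 hr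
        exact ⟨(hmem r hrF).1, mem_Ico_two_pow_log_div (by omega) (hmem r hrF).2⟩
    _ ≤ 2 * (3 * n) / p := sum_range_div_two_pow_mul_le (by positivity) _ _
    _ < 12 * n / p := by
        have : (0 : ℝ) < n := by exact_mod_cast hn
        exact div_lt_div_of_pos_right (by linarith) (by exact_mod_cast (by omega : 0 < p))

/-- For `p ≥ 2` and any string of length `n ≥ 1`, the sum of the exponents of
all cubic runs with minimal period at least `p` is less than `12n/p`. -/
theorem sum_of_exponents_of_cubic_runs {α : Type*} [LinearOrder α]
    (p n : ℕ) (hp : 2 ≤ p) (hn : 0 < n) (t : ℕ → α) :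
    (∑ᶠ ij ∈ {ij : ℕ × ℕ | IsCubicRun t n ij.1 ij.2 ∧ p ≤ minPeriod t ij.1 ij.2},
        ((ij.2 + 1 - ij.1 : ℕ) : ℝ) / (minPeriod t ij.1 ij.2 : ℝ))
      < 12 * n / p :=
  sum_of_exponents_of_cubic_runs_general p n hp hn t
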